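/- Every 2-coloring of the Boolean lattice Q_5 in which the empty set is colored red and at least two distinct singleton sets are colored red contains a red copy of Q_2 or a blue copy of Q_3. -/

import Mathlib

/-!
Let `x ≠ y` be the two red singletons. If some red set `D` contains both, then `∅, {x}, {y}, D`
is a red copy of `Q₂`. Otherwise every superset of `{x, y}` is blue, and these supersets form
the interval `[{x, y}, [5]]`, a copy of `Q₃`.
-/

/-- A red copy of the Boolean lattice `Q m` inside the 2-colored Boolean lattice `Q N`,
where `c S = true` means `S` is red and `c S = false` means `S` is blue. -/
def HasRedCopy (m N : ℕ) (c : Finset (Fin N) → Bool) : Prop :=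
  ∃ f : Finset (Fin m) → Finset (Fin N),
    Function.Injective f ∧
    (∀ S T : Finset (Fin m), S ⊆ T ↔ f S ⊆ f T) ∧
    (∀ S : Finset (Fin m), c (f S) = true)

/-- A blue copy of the Boolean lattice `Q m` inside the 2-colored Boolean lattice `Q N`. -/
def HasBlueCopy (m N : ℕ) (c : Finset (Fin N) → Bool) : Prop :=
  ∃ f : Finset (Fin m) → Finset (Fin N),
    Function.Injective f ∧
    (∀ S T : Finset (Fin m), S ⊆ T ↔ f S ⊆ f T) ∧
    (∀ S : Finset (Fin m), c (f S) = false)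

open Finset

section CubeEmbeddings

variable {ι α : Type*} [Fintype ι]

theorem exists_orderEmbedding_map_replace_top [DecidableEq ι] (g : ι ↪ α) {D : Finset α}
    (hD : univ.map g ⊆ D) :
    ∃ f : Finset ι ↪o Finset α, (∀ S ≠ univ, f S = S.map g) ∧ f univ = D := by
  refine ⟨OrderEmbedding.ofMapLEIff (fun S => if S = univ then D else S.map g) ?_,
    fun S hS => if_neg hS, if_pos rfl⟩
  intro S T
  by_cases hS : S = univ <;> by_cases hT : T = univ <;>
    simp only [hS, hT, if_true, if_false, subset_refl, subset_univ, iff_true]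
  · refine ⟨fun h => absurd (univ_subset_iff.1 (map_subset_map.1 (hD.trans h))) hT,
      fun h => absurd (univ_subset_iff.1 h) hT⟩
  · exact (map_subset_map.2 (subset_univ S)).trans hD
  · exact map_subset_map

theorem exists_orderEmbedding_supersets [DecidableEq α] [Fintype α] (A : Finset α)
    (hcard : Fintype.card ι ≤ #Aᶜ) :
    ∃ f : Finset ι ↪o Finset α, ∀ S, A ⊆ f S := by
  obtain ⟨e⟩ :=
    Function.Embedding.nonempty_of_card_le (α := ι) (β := ↥Aᶜ) (by rwa [Fintype.card_coe])
  let g : ι ↪ α := e.trans (Function.Embedding.subtype _)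
  have hdisj : ∀ S : Finset ι, Disjoint A (S.map g) := fun S =>
    disjoint_left.2 fun a ha hmem => by
      obtain ⟨i, -, rfl⟩ := mem_map.1 hmem
      exact mem_compl.1 (e i).2 ha
  refine ⟨OrderEmbedding.ofMapLEIff (fun S => A ∪ S.map g) fun S T => ?_,
    fun S => subset_union_left⟩
  refine ⟨fun h => ?_, fun h => union_subset_union_right (map_subset_map.2 h)⟩
  rw [← map_subset_map (f := g), ← union_sdiff_cancel_left (hdisj S),
    ← union_sdiff_cancel_left (hdisj T)]
  exact sdiff_subset_sdiff h subset_rfl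

end CubeEmbeddings

section Copies

variable {m N : ℕ} (c : Finset (Fin N) → Bool)

theorem hasRedCopy_of_orderEmbedding (f : Finset (Fin m) ↪o Finset (Fin N))
    (hf : ∀ S, c (f S) = true) : HasRedCopy m N c :=
  ⟨f, f.injective, fun _ _ => f.le_iff_le.symm, hf⟩

theorem hasBlueCopy_of_orderEmbedding (f : Finset (Fin m) ↪o Finset (Fin N))
    (hf : ∀ S, c (f S) = false) : HasBlueCopy m N c :=
  ⟨f, f.injective, fun _ _ => f.le_iff_le.symm, hf⟩

theorem hasRedCopy_two_of_red_diamond {x y : Fin N} (hxy : x ≠ y) {D : Finset (Fin N)}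
    (hD : {x, y} ⊆ D) (h0 : c ∅ = true) (hx : c {x} = true) (hy : c {y} = true)
    (hDc : c D = true) :
    HasRedCopy 2 N c := by
  let g : Fin 2 ↪ Fin N := ⟨![x, y], by
    intro i j; fin_cases i <;> fin_cases j <;> simp [hxy, hxy.symm]⟩
  have hg0 : g 0 = x := rfl
  have hg1 : g 1 = y := rfl
  have hg : univ.map g = {x, y} := by ext; simp [Fin.exists_fin_two, hg0, hg1, eq_comm]
  obtain ⟨f, hf, htop⟩ := exists_orderEmbedding_map_replace_top g (hg ▸ hD)
  refine hasRedCopy_of_orderEmbedding c f fun S => ?_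
  have hS : S = univ ∨ S = ∅ ∨ S = {0} ∨ S = {1} := by revert S; decide
  rcases hS with rfl | rfl | rfl | rfl
  · rwa [htop]
  all_goals rw [hf _ (by decide)]; simpa [hg0, hg1]

theorem hasBlueCopy_of_supersets_blue (A : Finset (Fin N)) (hcard : m ≤ #Aᶜ)
    (hblue : ∀ S, A ⊆ S → c S = false) : HasBlueCopy m N c := by
  obtain ⟨f, hf⟩ := exists_orderEmbedding_supersets (ι := Fin m) A (by simpa using hcard)
  exact hasBlueCopy_of_orderEmbedding c f fun S => hblue _ (hf S)

end Copies

/-- every 2-coloring of Q_5 with ∅ red and at least two distinct red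
singletons contains a red copy of Q_2 or a blue copy of Q_3. -/
theorem Q5_two_red_singletons (c : Finset (Fin 5) → Bool)
    (hbot : c ∅ = true)
    (hsing : ∃ x y : Fin 5, x ≠ y ∧ c {x} = true ∧ c {y} = true) :
    HasRedCopy 2 5 c ∨ HasBlueCopy 3 5 c := by
  obtain ⟨x, y, hxy, hx, hy⟩ := hsing
  by_cases hred : ∃ D, {x, y} ⊆ D ∧ c D = true
  · obtain ⟨D, hD, hDc⟩ := hred
    exact Or.inl (hasRedCopy_two_of_red_diamond c hxy hD hbot hx hy hDc)
  · simp only [not_exists, not_and, Bool.not_eq_true] at hred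
    refine Or.inr (hasBlueCopy_of_supersets_blue c {x, y} ?_ hred)
    rw [card_compl, card_pair hxy, Fintype.card_fin]
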